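/- Let M be the set of fixed-point-free involutions in the symmetric group on the set {1, 2, 3, 4, 5, 6} (M has exactly 15 elements), and let the subgroup H of S₆ generated by the 3-cycle (1 2 3) act on M by conjugation. Then this action has exactly 5 orbits, each of size 3. Moreover, the 6 elements of M that map the subset {1, 2, 3} onto the subset {4, 5, 6} form exactly 2 of these orbits, and the remaining 9 elements of M form exactly 3 of these orbits. -/

import Mathlib

/-!
The subgroup `H17` is generated by the 3-cycle `c = (0 1 2)`, so the conjugation orbit of `σ` is
`{σ, c σ c⁻¹, c² σ c⁻²}`. A fixed-point-free involution of a six-element set is a product of three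
disjoint transpositions, so there are 15 of them and they can be listed explicitly; with
`FPFInv`, `M17` and the orbits replaced by explicit finsets, every claim is a finite computation.
-/

/-- The set of fixed-point-free involutions of `{1,…,6}` (realized on `Fin 6`). -/
def FPFInv : Set (Equiv.Perm (Fin 6)) := {σ | σ * σ = 1 ∧ ∀ i, σ i ≠ i}

/-- The subgroup of `S₆` generated by the 3-cycle `(1 2 3)` (zero-indexed on `Fin 6`). -/
def H17 : Subgroup (Equiv.Perm (Fin 6)) :=
  Subgroup.closure {Equiv.swap 0 1 * Equiv.swap 1 2}

/-- The orbits of the conjugation action of `H17` on `FPFInv`. -/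
def Orbits17 : Set (Set (Equiv.Perm (Fin 6))) :=
  (fun σ => {τ | ∃ g ∈ H17, g * σ * g⁻¹ = τ}) '' FPFInv

/-- The elements of `FPFInv` mapping the subset `{1, 2, 3}` onto the subset `{4, 5, 6}`
(zero-indexed: `{0, 1, 2}` onto `{3, 4, 5}`). -/
def M17 : Set (Equiv.Perm (Fin 6)) :=
  {σ ∈ FPFInv | (σ : Fin 6 → Fin 6) '' {0, 1, 2} = {3, 4, 5}}

theorem Finset.ncard_image_coe {α : Type*} (O : Finset (Finset α)) :
    (((↑) : Finset α → Set α) '' ↑O).ncard = O.card := by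
  rw [Set.ncard_image_of_injective _ Finset.coe_injective, Set.ncard_coe_finset]

theorem Finset.sep_image_coe_subset {α : Type*} [DecidableEq α] (O : Finset (Finset α))
    (A : Finset α) :
    {S ∈ ((↑) : Finset α → Set α) '' ↑O | S ⊆ ↑A} =
      (↑) '' (↑(O.filter (· ⊆ A)) : Set (Finset α)) := by
  ext S
  constructor
  · rintro ⟨⟨t, ht, rfl⟩, hsub⟩
    exact ⟨t, Finset.mem_filter.2 ⟨ht, Finset.coe_subset.1 hsub⟩, rfl⟩
  · rintro ⟨t, ht, rfl⟩
    obtain ⟨ht, hsub⟩ := Finset.mem_filter.1 ht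
    exact ⟨⟨t, ht, rfl⟩, Finset.coe_subset.2 hsub⟩

theorem IsOfFinOrder.setOf_conj_zpowers_eq_image_range {G : Type*} [Group G] [DecidableEq G]
    {g : G} (hg : IsOfFinOrder g) (σ : G) :
    {τ | ∃ h ∈ Subgroup.zpowers g, h * σ * h⁻¹ = τ} =
      ↑((Finset.range (orderOf g)).image fun k => g ^ k * σ * (g ^ k)⁻¹) := by
  ext τ
  simp only [hg.mem_zpowers_iff_mem_range_orderOf, Finset.mem_image, Set.mem_ofPred_eq,
    Finset.coe_image, Set.mem_image, Finset.mem_coe]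
  constructor
  · rintro ⟨_, ⟨k, hk, rfl⟩, rfl⟩
    exact ⟨k, hk, rfl⟩
  · rintro ⟨k, hk, rfl⟩
    exact ⟨_, ⟨k, hk, rfl⟩, rfl⟩

namespace PairingOrbits

open Equiv Finset

def cycle012 : Perm (Fin 6) := swap 0 1 * swap 1 2

theorem H17_eq_zpowers : H17 = Subgroup.zpowers cycle012 := by
  rw [H17, Subgroup.zpowers_eq_closure, cycle012]

theorem orderOf_cycle012 : orderOf cycle012 = 3 :=
  orderOf_eq_prime (by decide) (by decide)

def conjOrbit (σ : Perm (Fin 6)) : Finset (Perm (Fin 6)) :=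
  (range 3).image fun k => cycle012 ^ k * σ * (cycle012 ^ k)⁻¹

theorem coe_conjOrbit (σ : Perm (Fin 6)) :
    (conjOrbit σ : Set (Perm (Fin 6))) = {τ | ∃ g ∈ H17, g * σ * g⁻¹ = τ} := by
  rw [H17_eq_zpowers, (isOfFinOrder_of_finite _).setOf_conj_zpowers_eq_image_range,
    orderOf_cycle012, conjOrbit]

def pairing (a b c d e f : Fin 6) : Perm (Fin 6) := swap a b * swap c d * swap e f

-- `0` has 5 possible partners, then the least remaining point has 3.
def pairings : Finset (Perm (Fin 6)) :=
  {pairing 0 1 2 3 4 5, pairing 0 1 2 4 3 5, pairing 0 1 2 5 3 4,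
   pairing 0 2 1 3 4 5, pairing 0 2 1 4 3 5, pairing 0 2 1 5 3 4,
   pairing 0 3 1 2 4 5, pairing 0 3 1 4 2 5, pairing 0 3 1 5 2 4,
   pairing 0 4 1 2 3 5, pairing 0 4 1 3 2 5, pairing 0 4 1 5 2 3,
   pairing 0 5 1 2 3 4, pairing 0 5 1 3 2 4, pairing 0 5 1 4 2 3}

set_option maxRecDepth 10000 in
theorem mem_pairings_iff : ∀ σ, σ ∈ pairings ↔ σ * σ = 1 ∧ ∀ i, σ i ≠ i := by
  decide

theorem coe_pairings : (pairings : Set (Perm (Fin 6))) = FPFInv :=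
  Set.ext mem_pairings_iff

def crossPairings : Finset (Perm (Fin 6)) :=
  pairings.filter fun σ => ({0, 1, 2} : Finset (Fin 6)).image σ = {3, 4, 5}

theorem coe_crossPairings : (crossPairings : Set (Perm (Fin 6))) = M17 := by
  rw [crossPairings, coe_filter, M17, ← coe_pairings]
  refine Set.sep_ext_iff.2 fun σ _ => ?_
  rw [← coe_inj, coe_image]
  push_cast
  rfl

def orbits : Finset (Finset (Perm (Fin 6))) := pairings.image conjOrbit

theorem orbits17_eq : Orbits17 = (↑) '' (orbits : Set (Finset (Perm (Fin 6)))) := by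
  rw [Orbits17, ← coe_pairings, orbits, coe_image, ← Set.image_comp]
  simp only [Function.comp_def, coe_conjOrbit]

-- The bounded `∀` facts go through `filter_eq_self`: `decide` on `∀ t ∈ orbits, _` is far slower.
set_option maxRecDepth 100000 in
theorem orbit_counts :
    pairings.card = 15 ∧ orbits.card = 5 ∧ (∀ t ∈ orbits, t.card = 3) ∧ crossPairings.card = 6 ∧
    (pairings \ crossPairings).card = 9 ∧
    (∀ t ∈ orbits, t ⊆ crossPairings ∨ t ⊆ pairings \ crossPairings) ∧
    (orbits.filter (· ⊆ crossPairings)).card = 2 ∧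
    (orbits.filter (· ⊆ pairings \ crossPairings)).card = 3 :=
  ⟨by decide, by decide, filter_eq_self.1 (by decide), by decide, by decide,
    filter_eq_self.1 (by decide), by decide, by decide⟩

end PairingOrbits

open PairingOrbits

theorem stmt17 :
    FPFInv.ncard = 15 ∧
    Orbits17.ncard = 5 ∧
    (∀ S ∈ Orbits17, S.ncard = 3) ∧
    M17.ncard = 6 ∧
    (FPFInv \ M17).ncard = 9 ∧
    (∀ S ∈ Orbits17, S ⊆ M17 ∨ S ⊆ FPFInv \ M17) ∧
    {S ∈ Orbits17 | S ⊆ M17}.ncard = 2 ∧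
    {S ∈ Orbits17 | S ⊆ FPFInv \ M17}.ncard = 3 := by
  rw [← coe_crossPairings, ← coe_pairings, ← Finset.coe_sdiff, orbits17_eq,
    Finset.sep_image_coe_subset, Finset.sep_image_coe_subset]
  simp only [Set.ncard_coe_finset, Finset.ncard_image_coe, Set.forall_mem_image,
    Finset.mem_coe, Finset.coe_subset]
  exact orbit_counts
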